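/- arXiv:1301.3127 — 7 statements merged into one kernel-verified Lean document; each statement's English description precedes it below -/
import Mathlib

section
/- Let g be a guard and write g = g_L ∧ g_U, where g_L is the conjunction of the lower-bound atomic constraints of g and g_U is the conjunction of the upper-bound atomic constraints of g, and let R ⊆ X. If W₁ is a time-elapsed set of valuations, then Post_{g,R}(W₁) = Post_{g_U,R}(Post_{g_L,∅}(W₁)). -/
/-! Common framework: clocks, valuations, guards, zones, timed automata,
LU-bounds and LU-abstraction, following the paper's definitions. -/

abbrev Val (X : Type*) := X → NNReal

/-- Time delay: `v + δ`. -/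
def delay {X : Type*} (v : Val X) (δ : NNReal) : Val X := fun x => v x + δ

open Classical in
/-- Reset `[R]v`. -/
noncomputable def resetV {X : Type*} (R : Set X) (v : Val X) : Val X :=
  fun x => if x ∈ R then 0 else v x

/-- The valuation `0̄`. -/
def zeroVal (X : Type*) : Val X := fun _ => 0

/-- Comparison operators for atomic clock constraints. -/
inductive Cmp where
  | lt | le | eq | ge | gt

/-- Satisfaction of `a # c`. -/
def Cmp.sat : Cmp → NNReal → ℕ → Prop
  | .lt, a, c => a < (c : NNReal)
  | .le, a, c => a ≤ (c : NNReal)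
  | .eq, a, c => a = (c : NNReal)
  | .ge, a, c => (c : NNReal) ≤ a
  | .gt, a, c => (c : NNReal) < a

/-- An atomic clock constraint `x # c`. -/
structure Atomic (X : Type*) where
  clock : X
  cmp : Cmp
  bound : ℕ

/-- A guard is a finite conjunction of atomic constraints. -/
abbrev Guard (X : Type*) := List (Atomic X)

/-- `v ⊨ g`. -/
def satG {X : Type*} (v : Val X) (g : Guard X) : Prop :=
  ∀ a ∈ g, a.cmp.sat (v a.clock) a.bound

/-- Lower-bound constraints: `x > c` or `x ≥ c`. -/
def Atomic.isLower {X : Type*} (a : Atomic X) : Prop := a.cmp = Cmp.gt ∨ a.cmp = Cmp.ge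

/-- Upper-bound constraints: `x < c` or `x ≤ c`. -/
def Atomic.isUpper {X : Type*} (a : Atomic X) : Prop := a.cmp = Cmp.lt ∨ a.cmp = Cmp.le

/-- A set `W` of valuations is time-elapsed. -/
def TimeElapsed {X : Type*} (W : Set (Val X)) : Prop :=
  ∀ v ∈ W, ∀ δ : NNReal, delay v δ ∈ W

/-- `Post_{g,R}(W) = { [R]v + δ | v ∈ W, v ⊨ g, δ ∈ ℝ≥0 }`. -/
def post {X : Type*} (g : Guard X) (R : Set X) (W : Set (Val X)) : Set (Val X) :=
  { w | ∃ v ∈ W, satG v g ∧ ∃ δ : NNReal, w = delay (resetV R v) δ }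

/-- LU-bounds take values in `ℕ ∪ {−∞}`. -/
abbrev Bnd := WithBot ℕ

/-- `b < r` where `b ∈ ℕ ∪ {−∞}` and `r ∈ ℝ≥0` (every real is greater than `−∞`). -/
def Bnd.ltVal (b : Bnd) (r : NNReal) : Prop :=
  ∀ n : ℕ, b = (n : Bnd) → (n : NNReal) < r

/-- The LU-preorder `v ⊑_LU v'`. -/
def luLe {X : Type*} (L U : X → Bnd) (v v' : Val X) : Prop :=
  ∀ x, (v' x < v x → Bnd.ltVal (L x) (v' x)) ∧ (v x < v' x → Bnd.ltVal (U x) (v x))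

/-- `a_LU(W)`. -/
def aLU {X : Type*} (L U : X → Bnd) (W : Set (Val X)) : Set (Val X) :=
  { v | ∃ v' ∈ W, luLe L U v v' }

/-- A timed automaton `(Q, q0, X, T, Acc)` (finiteness of `Q`, `X`, `trans`
is imposed as hypotheses of the theorems). -/
structure TA (Q X : Type*) where
  q0 : Q
  trans : Set (Q × Guard X × Set X × Q)
  acc : Set Q

/-- One delay or action transition between configurations. -/
def step {Q X : Type*} (A : TA Q X) (c c' : Q × Val X) : Prop :=
  (c'.1 = c.1 ∧ ∃ δ : NNReal, c'.2 = delay c.2 δ) ∨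
  (∃ g R, (c.1, g, R, c'.1) ∈ A.trans ∧ satG c.2 g ∧ c'.2 = resetV R c.2)

/-- There is a run (finite alternating sequence of delay and action transitions)
from `c` to `c'`. -/
def Reach {Q X : Type*} (A : TA Q X) : (Q × Val X) → (Q × Val X) → Prop :=
  Relation.ReflTransGen (step A)

/-- Symbolic transition `(q,W) ⇒^t (q', Post_t(W))`, union over all `t ∈ T`. -/
def symbStep {Q X : Type*} (A : TA Q X) (p p' : Q × Set (Val X)) : Prop :=
  ∃ g R, (p.1, g, R, p'.1) ∈ A.trans ∧ p'.2 = post g R p.2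

/-- The initial zone `Z0 = { 0̄ + δ | δ ∈ ℝ≥0 }`. -/
def Z0 (X : Type*) : Set (Val X) := { v | ∃ δ : NNReal, v = delay (zeroVal X) δ }

/-- Time-abstract simulation for `A`. -/
def IsTASim {Q X : Type*} (A : TA Q X) (S : (Q × Val X) → (Q × Val X) → Prop) : Prop :=
  (∀ c c', S c c' → c.1 = c'.1) ∧
  (∀ (q : Q) (v v' : Val X) (δ : NNReal) (g : Guard X) (R : Set X) (q1 : Q),
    S (q, v) (q, v') → (q, g, R, q1) ∈ A.trans → satG (delay v δ) g →
    ∃ δ' : NNReal, satG (delay v' δ') g ∧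
      S (q1, resetV R (delay v δ)) (q1, resetV R (delay v' δ')))

/-- Abstraction induced by a preorder `≼` on valuations. -/
def aAbs {X : Type*} (pre : Val X → Val X → Prop) (W : Set (Val X)) : Set (Val X) :=
  { v | ∃ v' ∈ W, pre v v' }

/-- Abstract transition `(q,W) ⇒_a (q', a(W'))` whenever `W = a(W)` and `(q,W) ⇒ (q',W')`. -/
def absStep {Q X : Type*} (A : TA Q X) (pre : Val X → Val X → Prop)
    (p p' : Q × Set (Val X)) : Prop :=
  p.2 = aAbs pre p.2 ∧ ∃ W', symbStep A p (p'.1, W') ∧ p'.2 = aAbs pre W'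

/-! Lower-bound constraints are preserved by time elapse, so on a time-elapsed set the
lower part of a guard can be applied first, as a filter with no reset and no delay; the
upper part together with the reset then yields the original `Post`. -/

@[simp]
theorem resetV_empty {X : Type*} (v : Val X) : resetV (∅ : Set X) v = v := by
  funext x
  simp [resetV]

@[simp]
theorem delay_zero {X : Type*} (v : Val X) : delay v 0 = v := by
  funext x
  simp [delay]

theorem Atomic.isLower.sat_mono {X : Type*} {a : Atomic X} (ha : a.isLower)
    {r s : NNReal} (hrs : r ≤ s) (hr : a.cmp.sat r a.bound) : a.cmp.sat s a.bound := by
  rcases ha with h | h <;> rw [h] at hr ⊢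
  · exact hr.trans_le hrs
  · exact hr.trans hrs

theorem satG_delay_of_isLower {X : Type*} {g : Guard X} (hg : ∀ a ∈ g, a.isLower)
    {v : Val X} (hv : satG v g) (δ : NNReal) : satG (delay v δ) g :=
  fun a ha => (hg a ha).sat_mono le_self_add (hv a ha)

theorem post_empty_of_isLower {X : Type*} {g : Guard X} (hg : ∀ a ∈ g, a.isLower)
    {W : Set (Val X)} (hW : TimeElapsed W) : post g ∅ W = {v ∈ W | satG v g} := by
  ext w
  constructor
  · rintro ⟨v, hv, hsat, δ, rfl⟩
    rw [resetV_empty]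
    exact ⟨hW v hv δ, satG_delay_of_isLower hg hsat δ⟩
  · rintro ⟨hw, hsat⟩
    exact ⟨w, hw, hsat, 0, by simp⟩

theorem post_sep_satG {X : Type*} {g gL gU : Guard X}
    (hsplit : ∀ v : Val X, satG v g ↔ satG v gL ∧ satG v gU) (R : Set X) (W : Set (Val X)) :
    post gU R {v ∈ W | satG v gL} = post g R W := by
  ext w
  simp only [post, Set.mem_ofPred_eq, hsplit, and_assoc]

theorem stmt_0_general {X : Type*} (g gL gU : Guard X)
    (hgL : ∀ a ∈ gL, a.isLower)
    (hsplit : ∀ v : Val X, satG v g ↔ satG v gL ∧ satG v gU)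
    (R : Set X) (W₁ : Set (Val X)) (hW₁ : TimeElapsed W₁) :
    post g R W₁ = post gU R (post gL (∅ : Set X) W₁) := by
  rw [post_empty_of_isLower hgL hW₁, post_sep_satG hsplit]

/-- If `W₁` is time-elapsed and `g` splits as the conjunction of its
lower-bound part `gL` and its upper-bound part `gU`, then
`Post_{g,R}(W₁) = Post_{gU,R}(Post_{gL,∅}(W₁))`. -/
theorem stmt_0 {X : Type*} [Finite X] (g gL gU : Guard X)
    (hgL : ∀ a ∈ gL, a.isLower) (hgU : ∀ a ∈ gU, a.isUpper)
    (hsplit : ∀ v : Val X, satG v g ↔ satG v gL ∧ satG v gU)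
    (R : Set X) (W₁ : Set (Val X)) (hW₁ : TimeElapsed W₁) :
    post g R W₁ = post gU R (post gL (∅ : Set X) W₁) :=
  stmt_0_general g gL gU hgL hsplit R W₁ hW₁
end

section
/- Let G be an adaptive simulation graph for a timed automaton A. Then for every sequence of symbolic transitions (q0, Z0) ⇒ (q1, Z1) ⇒ … ⇒ (q, Z) in which every set Z1, …, Z is nonempty, there exists a non-tentative node of G labeled (q, Z₁*, L₁, U₁) such that Z ⊆ a_{L₁U₁}(Z₁*). -/
/-- An adaptive simulation graph (ASG) for the timed automaton `A`. -/
structure ASG {Q X : Type*} (A : TA Q X) where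
  Node : Type
  st : Node → Q
  zone : Node → Set (Val X)
  Lb : Node → X → Bnd
  Ub : Node → X → Bnd
  init : Node
  tent : Node → Prop
  edge : Node → Node → Prop
  /-- the covering node associated to a tentative node -/
  cov : Node → Node
  /-- every node is reachable from the initial node by edges -/
  reach : ∀ n, Relation.ReflTransGen edge init n
  /-- G1 -/
  g1_st : st init = A.q0
  g1_zone : zone init = Z0 X
  /-- G2: every non-tentative node has all its symbolic successors -/
  g2 : ∀ n, ¬ tent n → ∀ g R q', (st n, g, R, q') ∈ A.trans →
        post g R (zone n) ≠ ∅ →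
        ∃ n', edge n n' ∧ st n' = q' ∧ zone n' = post g R (zone n)
  /-- G2: every edge of the graph arises in this way -/
  g2' : ∀ n n', edge n n' → ¬ tent n ∧
        ∃ g R, (st n, g, R, st n') ∈ A.trans ∧ zone n' = post g R (zone n) ∧
               post g R (zone n) ≠ ∅
  /-- G3 -/
  g3 : ∀ n, tent n → ¬ tent (cov n) ∧ st (cov n) = st n ∧
        zone n ⊆ aLU (Lb (cov n)) (Ub (cov n)) (zone (cov n))
  /-- I1 -/
  i1 : ∀ n g R q', (st n, g, R, q') ∈ A.trans → post g R (zone n) = ∅ →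
        post g R (aLU (Lb n) (Ub n) (zone n)) = ∅
  /-- I2 -/
  i2 : ∀ n n', edge n n' → ∀ g R, (st n, g, R, st n') ∈ A.trans →
        zone n' = post g R (zone n) →
        post g R (aLU (Lb n) (Ub n) (zone n)) ⊆ aLU (Lb n') (Ub n') (zone n')
  /-- I3 -/
  i3 : ∀ n, tent n → ∀ x, Lb (cov n) x ≤ Lb n x ∧ Ub (cov n) x ≤ Ub n x

/-! Induction along the symbolic path, with the invariant that the current set is contained in
the LU-abstraction of the zone of some non-tentative node in the same state. Invariant I1
guarantees that such a node has a successor for the next transition, and I2 carries the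
inclusion along that edge. If the successor is tentative, G3 and I3 pass the inclusion on to its
covering node: smaller bounds give a coarser preorder, and `a_LU` is idempotent by transitivity
of `⊑_LU`. -/

namespace Bnd

lemma ltVal.of_le_left {b b' : Bnd} {r : NNReal} (hb : b' ≤ b) (h : b.ltVal r) :
    b'.ltVal r := by
  intro n hn
  subst hn
  obtain ⟨m, rfl⟩ := WithBot.ne_bot_iff_exists.mp (ne_bot_of_le_ne_bot WithBot.coe_ne_bot hb)
  calc (n : NNReal) ≤ m := by exact_mod_cast WithBot.coe_le_coe.mp hb
    _ < r := h m rfl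

lemma ltVal.trans_le {b : Bnd} {r r' : NNReal} (h : b.ltVal r) (hr : r ≤ r') : b.ltVal r' :=
  fun n hn => (h n hn).trans_le hr

end Bnd

section LUPreorder

variable {X : Type*}

lemma luLe_refl (L U : X → Bnd) (v : Val X) : luLe L U v v :=
  fun _ => ⟨fun h => absurd h (lt_irrefl _), fun h => absurd h (lt_irrefl _)⟩

lemma luLe_trans {L U : X → Bnd} {u v w : Val X} (huv : luLe L U u v) (hvw : luLe L U v w) :
    luLe L U u w := by
  intro x
  obtain ⟨huvL, huvU⟩ := huv x
  obtain ⟨hvwL, hvwU⟩ := hvw x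
  constructor
  · intro hwu
    rcases lt_or_ge (w x) (v x) with hwv | hvw
    · exact hvwL hwv
    · exact (huvL (hvw.trans_lt hwu)).trans_le hvw
  · intro huw
    rcases lt_or_ge (u x) (v x) with huv | hvu
    · exact huvU huv
    · exact (hvwU (hvu.trans_lt huw)).trans_le hvu

lemma luLe.of_le_bounds {L U L' U' : X → Bnd} (hL : ∀ x, L' x ≤ L x) (hU : ∀ x, U' x ≤ U x)
    {v v' : Val X} (h : luLe L U v v') : luLe L' U' v v' := fun x =>
  ⟨fun hlt => (h x).1 hlt |>.of_le_left (hL x), fun hlt => (h x).2 hlt |>.of_le_left (hU x)⟩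

lemma subset_aLU (L U : X → Bnd) (W : Set (Val X)) : W ⊆ aLU L U W :=
  fun v hv => ⟨v, hv, luLe_refl L U v⟩

lemma aLU_mono (L U : X → Bnd) {W W' : Set (Val X)} (h : W ⊆ W') : aLU L U W ⊆ aLU L U W' :=
  fun _ ⟨v', hv', hle⟩ => ⟨v', h hv', hle⟩

lemma aLU_subset_of_le_bounds {L U L' U' : X → Bnd} (hL : ∀ x, L' x ≤ L x)
    (hU : ∀ x, U' x ≤ U x) (W : Set (Val X)) : aLU L U W ⊆ aLU L' U' W :=
  fun _ ⟨v', hv', hle⟩ => ⟨v', hv', hle.of_le_bounds hL hU⟩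

lemma aLU_aLU_subset (L U : X → Bnd) (W : Set (Val X)) : aLU L U (aLU L U W) ⊆ aLU L U W :=
  fun _ ⟨_, ⟨v'', hv'', hle'⟩, hle⟩ => ⟨v'', hv'', luLe_trans hle hle'⟩

lemma post_mono (g : Guard X) (R : Set X) {W W' : Set (Val X)} (h : W ⊆ W') :
    post g R W ⊆ post g R W' :=
  fun _ ⟨v, hv, hg, δ, hw⟩ => ⟨v, h hv, hg, δ, hw⟩

end LUPreorder

namespace ASG

variable {Q X : Type*} {A : TA Q X} (G : ASG A)

lemma exists_nonTent_of_subset_aLU (n : G.Node) {Z : Set (Val X)}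
    (hZ : Z ⊆ aLU (G.Lb n) (G.Ub n) (G.zone n)) :
    ∃ m, ¬ G.tent m ∧ G.st m = G.st n ∧ Z ⊆ aLU (G.Lb m) (G.Ub m) (G.zone m) := by
  by_cases hn : G.tent n
  · obtain ⟨hcov, hst, hcovZ⟩ := G.g3 n hn
    have hL x := (G.i3 n hn x).1
    have hU x := (G.i3 n hn x).2
    refine ⟨G.cov n, hcov, hst, ?_⟩
    calc Z ⊆ aLU (G.Lb n) (G.Ub n) (G.zone n) := hZ
      _ ⊆ aLU (G.Lb (G.cov n)) (G.Ub (G.cov n)) (G.zone n) := aLU_subset_of_le_bounds hL hU _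
      _ ⊆ aLU (G.Lb (G.cov n)) (G.Ub (G.cov n))
            (aLU (G.Lb (G.cov n)) (G.Ub (G.cov n)) (G.zone (G.cov n))) := aLU_mono _ _ hcovZ
      _ ⊆ aLU (G.Lb (G.cov n)) (G.Ub (G.cov n)) (G.zone (G.cov n)) := aLU_aLU_subset _ _ _
  · exact ⟨n, hn, rfl, hZ⟩

lemma exists_succ_of_subset_aLU {n : G.Node} (hn : ¬ G.tent n) {g : Guard X} {R : Set X}
    {q' : Q} (ht : (G.st n, g, R, q') ∈ A.trans) {Z : Set (Val X)}
    (hZ : Z ⊆ aLU (G.Lb n) (G.Ub n) (G.zone n)) (hne : post g R Z ≠ ∅) :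
    ∃ n', G.st n' = q' ∧ post g R Z ⊆ aLU (G.Lb n') (G.Ub n') (G.zone n') := by
  have hpost : post g R Z ⊆ post g R (aLU (G.Lb n) (G.Ub n) (G.zone n)) := post_mono g R hZ
  have hzone : post g R (G.zone n) ≠ ∅ := fun h0 =>
    hne (Set.subset_eq_empty hpost (G.i1 n g R q' ht h0))
  obtain ⟨n', hedge, rfl, hzone'⟩ := G.g2 n hn g R _ ht hzone
  exact ⟨n', rfl, hpost.trans (G.i2 n n' hedge g R ht hzone')⟩

theorem exists_nonTent_of_reflTransGen {p : Q × Set (Val X)}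
    (hp : Relation.ReflTransGen (fun p p' => symbStep A p p' ∧ p'.2 ≠ ∅) (A.q0, Z0 X) p) :
    ∃ n, ¬ G.tent n ∧ G.st n = p.1 ∧ p.2 ⊆ aLU (G.Lb n) (G.Ub n) (G.zone n) := by
  induction hp with
  | refl =>
    have hZ0 : Z0 X ⊆ aLU (G.Lb G.init) (G.Ub G.init) (G.zone G.init) :=
      G.g1_zone ▸ subset_aLU _ _ _
    obtain ⟨m, hm, hst, hZ⟩ := G.exists_nonTent_of_subset_aLU G.init hZ0
    exact ⟨m, hm, hst.trans G.g1_st, hZ⟩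
  | tail _ hstep ih =>
    obtain ⟨⟨g, R, ht, hpost⟩, hne⟩ := hstep
    obtain ⟨n, hn, hst, hZ⟩ := ih
    rw [← hst] at ht
    rw [hpost] at hne ⊢
    obtain ⟨n', hst', hZ'⟩ := G.exists_succ_of_subset_aLU hn ht hZ hne
    obtain ⟨m, hm, hst, hZm⟩ := G.exists_nonTent_of_subset_aLU n' hZ'
    exact ⟨m, hm, hst.trans hst', hZm⟩

end ASG

theorem stmt_1_general {Q X : Type*} (A : TA Q X)
    (G : ASG A) (q : Q) (Z : Set (Val X))
    (hpath : Relation.ReflTransGen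
      (fun p p' => symbStep A p p' ∧ p'.2 ≠ (∅ : Set (Val X))) (A.q0, Z0 X) (q, Z)) :
    ∃ n : G.Node, ¬ G.tent n ∧ G.st n = q ∧
      Z ⊆ aLU (G.Lb n) (G.Ub n) (G.zone n) :=
  G.exists_nonTent_of_reflTransGen hpath

/-- for every sequence of symbolic transitions from `(q0, Z0)` to `(q, Z)`
in which every intermediate set is nonempty, there is a non-tentative node
`(q, Z₁, L₁, U₁)` of the ASG with `Z ⊆ a_{L₁U₁}(Z₁)`. -/
theorem stmt_1 {Q X : Type*} [Finite Q] [Finite X] (A : TA Q X) (hT : A.trans.Finite)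
    (G : ASG A) (q : Q) (Z : Set (Val X))
    (hpath : Relation.ReflTransGen
      (fun p p' => symbStep A p p' ∧ p'.2 ≠ (∅ : Set (Val X))) (A.q0, Z0 X) (q, Z)) :
    ∃ n : G.Node, ¬ G.tent n ∧ G.st n = q ∧
      Z ⊆ aLU (G.Lb n) (G.Ub n) (G.zone n) :=
  stmt_1_general A G q Z hpath
end

section
/- Let A be a timed automaton and L, U LU-bound functions such that for every transition (q, g, R, q') ∈ T and every atomic constraint of g: if the constraint is x > c or x ≥ c then c ≤ L(x); if it is x < c or x ≤ c then c ≤ U(x); and if it is x = c then c ≤ L(x) and c ≤ U(x). Then the relation { ((q, v), (q, v')) | q ∈ Q, v ⊑_LU v' } is a time-abstract simulation for A. -/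
/-! The simulating run waits exactly as long as the simulated one. Delays and resets preserve
`⊑_LU`, and if `v ⊑_LU v'` then `v'` satisfies every guard constraint that `v` satisfies: a clock
can only be smaller in `v'` when it is above `L`, hence above every lower-bound constant, and it
can only be larger in `v'` when it is already above `U` in `v`, where `v` satisfies no upper-bound
constraint. -/

theorem Bnd.ltVal.mono {b : Bnd} {r s : NNReal} (h : b.ltVal r) (hrs : r ≤ s) : b.ltVal s :=
  fun n hn => (h n hn).trans_le hrs

theorem Bnd.ltVal.natCast_lt_of_le {b : Bnd} {c : ℕ} {r : NNReal} (h : b.ltVal r)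
    (hc : (c : Bnd) ≤ b) : (c : NNReal) < r := by
  obtain ⟨n, rfl⟩ := WithBot.ne_bot_iff_exists.mp (ne_bot_of_le_ne_bot WithBot.coe_ne_bot hc)
  exact lt_of_le_of_lt (by exact_mod_cast WithBot.coe_le_coe.mp hc) (h n rfl)

section LU

variable {X : Type*} {L U : X → Bnd}

def Atomic.BoundedByLU (L U : X → Bnd) (a : Atomic X) : Prop :=
  (a.isLower → (a.bound : Bnd) ≤ L a.clock) ∧
  (a.isUpper → (a.bound : Bnd) ≤ U a.clock) ∧
  (a.cmp = Cmp.eq → (a.bound : Bnd) ≤ L a.clock ∧ (a.bound : Bnd) ≤ U a.clock)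

theorem luLe_delay {v v' : Val X} (h : luLe L U v v') (δ : NNReal) :
    luLe L U (delay v δ) (delay v' δ) := by
  intro x
  simp only [delay, add_lt_add_iff_right]
  exact ⟨fun hlt => ((h x).1 hlt).mono le_self_add, fun hlt => ((h x).2 hlt).mono le_self_add⟩

theorem luLe_resetV {v v' : Val X} (h : luLe L U v v') (R : Set X) :
    luLe L U (resetV R v) (resetV R v') := by
  intro x
  by_cases hx : x ∈ R
  · simp [resetV, hx]
  · simpa [resetV, hx] using h x

theorem Atomic.sat_of_luLe {a : Atomic X} (ha : a.BoundedByLU L U) {w w' : Val X}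
    (h : luLe L U w w') (hw : a.cmp.sat (w a.clock) a.bound) :
    a.cmp.sat (w' a.clock) a.bound := by
  obtain ⟨x, cmp, c⟩ := a
  obtain ⟨hL, hU, hLU⟩ := ha
  have lower (hc : (c : Bnd) ≤ L x) (hlt : w' x < w x) : (c : NNReal) < w' x :=
    ((h x).1 hlt).natCast_lt_of_le hc
  have upper (hc : (c : Bnd) ≤ U x) (hlt : w x < w' x) : (c : NNReal) < w x :=
    ((h x).2 hlt).natCast_lt_of_le hc
  cases cmp <;> simp only [Cmp.sat, Atomic.isLower, Atomic.isUpper] at hw hL hU hLU ⊢ <;> grind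

theorem satG_of_luLe {g : Guard X} (hg : ∀ a ∈ g, a.BoundedByLU L U) {w w' : Val X}
    (h : luLe L U w w') (hw : satG w g) : satG w' g :=
  fun a ha => Atomic.sat_of_luLe (hg a ha) h (hw a ha)

end LU

theorem stmt_7_general {Q X : Type*} (A : TA Q X)
    (L U : X → Bnd)
    (hbounds : ∀ q g R q', (q, g, R, q') ∈ A.trans → ∀ a ∈ g,
      (a.cmp = Cmp.gt ∨ a.cmp = Cmp.ge → (a.bound : Bnd) ≤ L a.clock) ∧
      (a.cmp = Cmp.lt ∨ a.cmp = Cmp.le → (a.bound : Bnd) ≤ U a.clock) ∧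
      (a.cmp = Cmp.eq → (a.bound : Bnd) ≤ L a.clock ∧ (a.bound : Bnd) ≤ U a.clock)) :
    IsTASim A (fun c c' => c.1 = c'.1 ∧ luLe L U c.2 c'.2) := by
  refine ⟨fun _ _ h => h.1, fun q v v' δ g R q1 hS htr hsat => ?_⟩
  have hdelay : luLe L U (delay v δ) (delay v' δ) := luLe_delay hS.2 δ
  exact ⟨δ, satG_of_luLe (hbounds q g R q1 htr) hdelay hsat, rfl, luLe_resetV hdelay R⟩

/-- if `L, U` dominate all constants of the corresponding kinds of
atomic constraints appearing in guards of `A`, then the lift of `⊑_LU` is a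
time-abstract simulation for `A`. -/
theorem stmt_7 {Q X : Type*} [Finite Q] [Finite X] (A : TA Q X) (hT : A.trans.Finite)
    (L U : X → Bnd)
    (hbounds : ∀ q g R q', (q, g, R, q') ∈ A.trans → ∀ a ∈ g,
      (a.cmp = Cmp.gt ∨ a.cmp = Cmp.ge → (a.bound : Bnd) ≤ L a.clock) ∧
      (a.cmp = Cmp.lt ∨ a.cmp = Cmp.le → (a.bound : Bnd) ≤ U a.clock) ∧
      (a.cmp = Cmp.eq → (a.bound : Bnd) ≤ L a.clock ∧ (a.bound : Bnd) ≤ U a.clock)) :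
    IsTASim A (fun c c' => c.1 = c'.1 ∧ luLe L U c.2 c'.2) :=
  stmt_7_general A L U hbounds
end

section
/- Let R ⊆ X and let L, U and L', U' be LU-bound functions such that L'(x) ≤ L(x) and U'(x) ≤ U(x) for every clock x ∉ R. Then for every set of valuations Z, { [R]v | v ∈ a_LU(Z) } ⊆ a_{L'U'}({ [R]v | v ∈ Z }). In particular, if v ⊑_LU v' then [R]v ⊑_{L'U'} [R]v'. -/
theorem Bnd.ltVal.of_le {b b' : Bnd} {r : NNReal} (h : b' ≤ b) (hb : b.ltVal r) :
    b'.ltVal r := by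
  rintro n rfl
  obtain ⟨m, rfl, hnm⟩ := WithBot.coe_le_iff.mp h
  exact lt_of_le_of_lt (by exact_mod_cast hnm) (hb m rfl)

theorem image_aLU_subset {X : Type*} {L U L' U' : X → Bnd} {f : Val X → Val X}
    (hf : ∀ v v', luLe L U v v' → luLe L' U' (f v) (f v')) (Z : Set (Val X)) :
    f '' aLU L U Z ⊆ aLU L' U' (f '' Z) := by
  rintro _ ⟨v, ⟨v', hv', hle⟩, rfl⟩
  exact ⟨f v', Set.mem_image_of_mem f hv', hf v v' hle⟩

theorem luLe.resetV {X : Type*} {R : Set X} {L U L' U' : X → Bnd}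
    (hL : ∀ x ∉ R, L' x ≤ L x) (hU : ∀ x ∉ R, U' x ≤ U x) {v v' : Val X}
    (h : luLe L U v v') : luLe L' U' (resetV R v) (resetV R v') := by
  intro x
  by_cases hx : x ∈ R
  · simp [_root_.resetV, hx]
  · simp only [_root_.resetV, if_neg hx]
    exact ⟨fun hlt => ((h x).1 hlt).of_le (hL x hx), fun hlt => ((h x).2 hlt).of_le (hU x hx)⟩

theorem stmt_8_general {X : Type*} (R : Set X) (L U L' U' : X → Bnd)
    (hL : ∀ x ∉ R, L' x ≤ L x) (hU : ∀ x ∉ R, U' x ≤ U x) :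
    (∀ Z : Set (Val X),
      (fun v => resetV R v) '' (aLU L U Z) ⊆ aLU L' U' ((fun v => resetV R v) '' Z)) ∧
    (∀ v v' : Val X, luLe L U v v' → luLe L' U' (resetV R v) (resetV R v')) :=
  have reset_mono : ∀ v v' : Val X, luLe L U v v' → luLe L' U' (resetV R v) (resetV R v') :=
    fun _ _ h => h.resetV hL hU
  ⟨image_aLU_subset reset_mono, reset_mono⟩

/-- resets are compatible with the LU-abstraction provided the bounds
only decrease on non-reset clocks. -/
theorem stmt_8 {X : Type*} [Finite X] (R : Set X) (L U L' U' : X → Bnd)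
    (hL : ∀ x ∉ R, L' x ≤ L x) (hU : ∀ x ∉ R, U' x ≤ U x) :
    (∀ Z : Set (Val X),
      (fun v => resetV R v) '' (aLU L U Z) ⊆ aLU L' U' ((fun v => resetV R v) '' Z)) ∧
    (∀ v v' : Val X, luLe L U v v' → luLe L' U' (resetV R v) (resetV R v')) :=
  stmt_8_general R L U L' U' hL hU
end

section
/- The LU-preorder is compatible with equal time delays: if v ⊑_LU v' then v+δ ⊑_LU v'+δ for every δ ∈ ℝ≥0. Consequently, if a set W of valuations is time-elapsed, then a_LU(W) is time-elapsed. -/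
theorem luLe.delay {X : Type*} {L U : X → Bnd} {v v' : Val X} (h : luLe L U v v')
    (δ : NNReal) : luLe L U (delay v δ) (delay v' δ) := by
  intro x
  simp only [_root_.delay, add_lt_add_iff_right]
  exact ⟨fun hlt => (h x).1 hlt |>.mono le_self_add, fun hlt => (h x).2 hlt |>.mono le_self_add⟩

theorem TimeElapsed.aLU {X : Type*} {W : Set (Val X)} (hW : TimeElapsed W) (L U : X → Bnd) :
    TimeElapsed (aLU L U W) := by
  rintro v ⟨v', hv', hle⟩ δ
  exact ⟨delay v' δ, hW v' hv' δ, hle.delay δ⟩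

theorem stmt_12_general {X : Type*} (L U : X → Bnd) :
    (∀ (v v' : Val X) (δ : NNReal), luLe L U v v' → luLe L U (delay v δ) (delay v' δ)) ∧
    (∀ W : Set (Val X), TimeElapsed W → TimeElapsed (aLU L U W)) :=
  ⟨fun _ _ δ h => h.delay δ, fun _ hW => hW.aLU L U⟩

/-- `⊑_LU` is compatible with equal time delays, and `a_LU` preserves
time-elapsed sets. -/
theorem stmt_12 {X : Type*} [Finite X] (L U : X → Bnd) :
    (∀ (v v' : Val X) (δ : NNReal), luLe L U v v' → luLe L U (delay v δ) (delay v' δ)) ∧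
    (∀ W : Set (Val X), TimeElapsed W → TimeElapsed (aLU L U W)) :=
  stmt_12_general L U
end

section
/- Let x be a clock, d ∈ ℕ, ⋖ ∈ {<, ≤}, and let L, U be LU-bound functions with U(x) ≥ d. If no valuation v' in a set Z satisfies v'(x) ⋖ d, then no valuation v ∈ a_LU(Z) satisfies v(x) ⋖ d. -/
theorem Bnd.ltVal.natCast_lt {b : Bnd} {r : NNReal} (h : b.ltVal r) {d : ℕ} (hd : (d : Bnd) ≤ b) :
    (d : NNReal) < r := by
  obtain ⟨n, rfl⟩ := WithBot.ne_bot_iff_exists.mp (ne_bot_of_le_ne_bot WithBot.coe_ne_bot hd)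
  exact lt_of_le_of_lt (by exact_mod_cast WithBot.coe_le_coe.mp hd) (h n rfl)

theorem Cmp.sat_of_le_of_upper {c : Cmp} (hc : c = Cmp.lt ∨ c = Cmp.le) {d : ℕ} {a b : NNReal}
    (hab : a ≤ b) (hb : c.sat b d) : c.sat a d := by
  rcases hc with rfl | rfl
  exacts [hab.trans_lt hb, hab.trans hb]

theorem Cmp.le_of_sat_upper {c : Cmp} (hc : c = Cmp.lt ∨ c = Cmp.le) {d : ℕ} {a : NNReal}
    (ha : c.sat a d) : a ≤ d := by
  rcases hc with rfl | rfl
  exacts [ha.le, ha]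

theorem stmt_15_general {X : Type*} (x : X) (d : ℕ) (c : Cmp)
    (hc : c = Cmp.lt ∨ c = Cmp.le) (L U : X → Bnd) (hU : (d : Bnd) ≤ U x)
    (Z : Set (Val X)) (h : ∀ v' ∈ Z, ¬ c.sat (v' x) d) :
    ∀ v ∈ aLU L U Z, ¬ c.sat (v x) d := by
  rintro v ⟨v', hv', hvv'⟩ hsat
  have hlt : v x < v' x :=
    lt_of_not_ge fun hge => h v' hv' (Cmp.sat_of_le_of_upper hc hge hsat)
  exact (((hvv' x).2 hlt).natCast_lt hU).not_ge (Cmp.le_of_sat_upper hc hsat)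

/-- if `U(x) ≥ d` and no valuation of `Z` satisfies the upper-bound
constraint `x ⋖ d`, then no valuation of `a_LU(Z)` satisfies it either. -/
theorem stmt_15 {X : Type*} [Finite X] (x : X) (d : ℕ) (c : Cmp)
    (hc : c = Cmp.lt ∨ c = Cmp.le) (L U : X → Bnd) (hU : (d : Bnd) ≤ U x)
    (Z : Set (Val X)) (h : ∀ v' ∈ Z, ¬ c.sat (v' x) d) :
    ∀ v ∈ aLU L U Z, ¬ c.sat (v x) d :=
  stmt_15_general x d c hc L U hU Z h
end

section
/- Let Z be a zone and let g be a finite conjunction of upper-bound atomic constraints x₁ ⋖₁ d₁, …, x_k ⋖_k d_k (each ⋖ᵢ ∈ {<, ≤}, dᵢ ∈ ℕ). If no valuation in Z satisfies all of these constraints, then there exists an index i such that no valuation in Z satisfies xᵢ ⋖ᵢ dᵢ. -/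
/-- Satisfaction of `a ∼ c` over the reals with an integer constant. -/
def Cmp.satR : Cmp → ℝ → ℤ → Prop
  | .lt, a, c => a < (c : ℝ)
  | .le, a, c => a ≤ (c : ℝ)
  | .eq, a, c => a = (c : ℝ)
  | .ge, a, c => (c : ℝ) ≤ a
  | .gt, a, c => (c : ℝ) < a

/-- A zone constraint: `x ∼ c` or `x − y ∼ c` with `c ∈ ℤ`. -/
inductive ZClause (X : Type*) where
  | single (x : X) (c : Cmp) (k : ℤ)
  | diag (x y : X) (c : Cmp) (k : ℤ)

def ZClause.holds {X : Type*} (v : Val X) : ZClause X → Prop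
  | .single x c k => c.satR (v x : ℝ) k
  | .diag x y c k => c.satR ((v x : ℝ) - (v y : ℝ)) k

/-- A zone is a set of valuations definable by a finite conjunction of zone constraints. -/
def IsZone {X : Type*} (Z : Set (Val X)) : Prop :=
  ∃ l : List (ZClause X), Z = { v | ∀ cl ∈ l, cl.holds v }

/-! Zones are closed under pointwise minimum: the solution set of each zone constraint is
order-connected, and passing to `v ⊓ w` keeps every clock value and every clock difference between
its values at `v` and at `w`. Upper-bound constraints survive decreasing the valuation, so the
minimum of witnesses for the single constraints witnesses all of them at once. -/

lemma Cmp.ordConnected_satR (c : Cmp) (k : ℤ) : Set.OrdConnected {r : ℝ | c.satR r k} := by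
  cases c
  exacts [Set.ordConnected_Iio, Set.ordConnected_Iic, Set.ordConnected_singleton,
    Set.ordConnected_Ici, Set.ordConnected_Ioi]

lemma min_mem_uIcc {α : Type*} [LinearOrder α] (a b : α) : min a b ∈ Set.uIcc a b := by
  rcases min_choice a b with h | h <;> rw [h]
  exacts [Set.left_mem_uIcc, Set.right_mem_uIcc]

lemma min_sub_min_mem_uIcc {α : Type*} [AddCommGroup α] [LinearOrder α] [IsOrderedAddMonoid α]
    (a b c d : α) : min a b - min c d ∈ Set.uIcc (a - c) (b - d) := by
  rw [Set.mem_uIcc]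
  grind

lemma ZClause.holds_inf {X : Type*} (cl : ZClause X) {v w : Val X} (hv : cl.holds v)
    (hw : cl.holds w) : cl.holds (v ⊓ w) := by
  have hinf : ∀ x, ((v ⊓ w) x : ℝ) = min (v x : ℝ) (w x) := fun x => NNReal.coe_min _ _
  cases cl with
  | single x c k =>
    refine (c.ordConnected_satR k).uIcc_subset hv hw ?_
    simpa only [hinf] using min_mem_uIcc (v x : ℝ) (w x)
  | diag x y c k =>
    refine (c.ordConnected_satR k).uIcc_subset hv hw ?_
    simpa only [hinf] using min_sub_min_mem_uIcc (v x : ℝ) (w x) (v y) (w y)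

lemma IsZone.infClosed {X : Type*} {Z : Set (Val X)} (hZ : IsZone Z) : InfClosed Z := by
  obtain ⟨l, rfl⟩ := hZ
  exact fun v hv w hw cl hcl => cl.holds_inf (hv cl hcl) (hw cl hcl)

lemma Cmp.sat_of_le {c : Cmp} (hc : c = .lt ∨ c = .le) {a b : NNReal} {d : ℕ} (hab : a ≤ b)
    (hb : c.sat b d) : c.sat a d := by
  rcases hc with rfl | rfl
  exacts [hab.trans_lt hb, hab.trans hb]

theorem stmt_16_general {X : Type*} (Z : Set (Val X)) (hZ : IsZone Z)
    (k : ℕ) (hk : 0 < k) (xs : Fin k → X) (cs : Fin k → Cmp)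
    (hcs : ∀ i, cs i = Cmp.lt ∨ cs i = Cmp.le) (ds : Fin k → ℕ)
    (h : ¬ ∃ v ∈ Z, ∀ i, (cs i).sat (v (xs i)) (ds i)) :
    ∃ i, ∀ v ∈ Z, ¬ (cs i).sat (v (xs i)) (ds i) := by
  by_contra! hsat
  choose v hvZ hv using hsat
  have : Nonempty (Fin k) := Fin.pos_iff_nonempty.mp hk
  refine h ⟨Finset.univ.inf' Finset.univ_nonempty v,
    hZ.infClosed.finsetInf'_mem _ fun i _ => hvZ i, fun i => ?_⟩
  exact (cs i).sat_of_le (hcs i) (Finset.inf'_le v (Finset.mem_univ i) (xs i)) (hv i)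

/-- if no valuation of a zone satisfies a conjunction of upper-bound
constraints `x₁ ⋖₁ d₁, …, x_k ⋖_k d_k`, then some single constraint is satisfied by
no valuation of the zone. -/
theorem stmt_16 {X : Type*} [Finite X] (Z : Set (Val X)) (hZ : IsZone Z)
    (k : ℕ) (hk : 0 < k) (xs : Fin k → X) (cs : Fin k → Cmp)
    (hcs : ∀ i, cs i = Cmp.lt ∨ cs i = Cmp.le) (ds : Fin k → ℕ)
    (h : ¬ ∃ v ∈ Z, ∀ i, (cs i).sat (v (xs i)) (ds i)) :
    ∃ i, ∀ v ∈ Z, ¬ (cs i).sat (v (xs i)) (ds i) :=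
  stmt_16_general Z hZ k hk xs cs hcs ds h
end
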